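/- For 0 ≤ s ≤ k < a, the sum f_{a,k,s}(ν) = Σ_{0≤j≤a} (q^s ν)^j (ν;q)_{a-j} (ν^{-1} q^{-k};q)_j binom_q(a,j) vanishes identically (as a rational function of ν and q). -/

import Mathlib

/-
Replace `ν⁻¹q^{-k}` by `x` and `ν` by `y`, so that `x y q^k = 1`. Splitting
`(y;q)_m = (qy;q)_m - y(1 - q^m)(qy;q)_{m-1}` and absorbing `1 - q^{a+1-j}` into the q-binomial
coefficient expresses the sum for `(a + 1, s + 1, y)` through the sums for `(a + 1, s, qy)` and
`(a, s, qy)`; since `x (qy) q^{k-1} = 1`, this lowers `s` and `k` together. At `s = 0` the sum is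
the q-Chu–Vandermonde sum `(xy;q)_a = (q^{-k};q)_a`, whose factor `1 - q^{-k} q^k` vanishes as
`k < a`.
-/

open scoped BigOperators

noncomputable section

/-- The q-Pochhammer symbol `(z;q)_m = ∏_{j=0}^{m-1} (1 - z q^j)`. -/
def qP (q z : ℝ) (m : ℕ) : ℝ := ∏ j ∈ Finset.range m, (1 - z * q ^ j)

/-- The q-binomial coefficient, zero outside `0 ≤ k ≤ m`. -/
def qBinom (q : ℝ) (m k : ℕ) : ℝ :=
  if k ≤ m then qP q q m / (qP q q k * qP q q (m - k)) else 0

open Finset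

section QPochhammer

lemma qP_zero (q z : ℝ) : qP q z 0 = 1 :=
  prod_range_zero _

lemma qP_succ (q z : ℝ) (m : ℕ) : qP q z (m + 1) = qP q z m * (1 - z * q ^ m) :=
  prod_range_succ _ _

lemma qP_succ' (q z : ℝ) (m : ℕ) : qP q z (m + 1) = (1 - z) * qP q (q * z) m := by
  rw [qP, prod_range_succ', pow_zero, mul_one, mul_comm]
  exact congrArg _ (prod_congr rfl fun i _ => by ring)

lemma qP_eq_qP_mul_sub (q z : ℝ) (m : ℕ) :
    qP q z m = qP q (q * z) m - z * (1 - q ^ m) * qP q (q * z) (m - 1) := by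
  cases m with
  | zero => simp [qP_zero]
  | succ m => rw [qP_succ', Nat.add_sub_cancel, qP_succ]; ring

lemma qP_eq_zero_of_mul_pow_eq_one {q z : ℝ} {k a : ℕ} (hka : k < a) (hz : z * q ^ k = 1) :
    qP q z a = 0 :=
  prod_eq_zero (mem_range.2 hka) (by rw [hz, sub_self])

lemma qP_self_pos {q : ℝ} (hq0 : 0 < q) (hq1 : q < 1) (n : ℕ) : 0 < qP q q n :=
  prod_pos fun i _ => by
    rw [← pow_succ']
    exact sub_pos.2 (pow_lt_one₀ hq0.le hq1 i.succ_ne_zero)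

lemma one_sub_mul_pow_ne_zero {q : ℝ} (hq : ∀ n, qP q q n ≠ 0) (n : ℕ) :
    1 - q * q ^ n ≠ 0 :=
  right_ne_zero_of_mul (qP_succ q q n ▸ hq (n + 1))

end QPochhammer

section QBinom

variable {q : ℝ}

lemma qBinom_zero_right (hq : ∀ n, qP q q n ≠ 0) (m : ℕ) : qBinom q m 0 = 1 := by
  rw [qBinom, if_pos m.zero_le, Nat.sub_zero, qP_zero, one_mul, div_self (hq m)]

lemma qBinom_self (hq : ∀ n, qP q q n ≠ 0) (m : ℕ) : qBinom q m m = 1 := by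
  rw [qBinom, if_pos le_rfl, Nat.sub_self, qP_zero, mul_one, div_self (hq m)]

lemma qBinom_of_lt {m j : ℕ} (h : m < j) : qBinom q m j = 0 :=
  if_neg h.not_ge

lemma qBinom_succ_succ (hq : ∀ n, qP q q n ≠ 0) (m j : ℕ) :
    qBinom q (m + 1) (j + 1) = q ^ (j + 1) * qBinom q m (j + 1) + qBinom q m j := by
  rcases lt_trichotomy j m with h | rfl | h
  · obtain ⟨d, rfl⟩ : ∃ d, m = j + d + 1 := ⟨m - j - 1, by omega⟩
    simp only [qBinom, if_pos (by omega : j + 1 ≤ j + d + 1 + 1),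
      if_pos (by omega : j + 1 ≤ j + d + 1), if_pos (by omega : j ≤ j + d + 1),
      show j + d + 1 + 1 - (j + 1) = d + 1 by omega, show j + d + 1 - (j + 1) = d by omega,
      show j + d + 1 - j = d + 1 by omega, qP_succ q q (j + d + 1), qP_succ q q d, qP_succ q q j]
    have := hq j; have := hq d
    have := one_sub_mul_pow_ne_zero hq j; have := one_sub_mul_pow_ne_zero hq d
    field_simp
    ring
  · rw [qBinom_self hq, qBinom_self hq, qBinom_of_lt (Nat.lt_succ_self j)]
    ring
  · rw [qBinom_of_lt (by omega), qBinom_of_lt (by omega), qBinom_of_lt h]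
    ring

lemma qBinom_succ_mul_one_sub_pow (hq : ∀ n, qP q q n ≠ 0) (m j : ℕ) :
    qBinom q (m + 1) j * (1 - q ^ (m + 1 - j)) = (1 - q ^ (m + 1)) * qBinom q m j := by
  rcases le_or_gt j m with h | h
  · obtain ⟨d, rfl⟩ : ∃ d, m = j + d := ⟨m - j, by omega⟩
    simp only [qBinom, if_pos (by omega : j ≤ j + d + 1), if_pos (by omega : j ≤ j + d),
      show j + d + 1 - j = d + 1 by omega, show j + d - j = d by omega,
      qP_succ q q (j + d), qP_succ q q d]
    have := hq j; have := hq d; have := one_sub_mul_pow_ne_zero hq d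
    field_simp
    ring
  · rw [Nat.sub_eq_zero_of_le h, pow_zero, sub_self, mul_zero, qBinom_of_lt h, mul_zero]

end QBinom

section QVandermonde

def qVandermondeSum (q : ℝ) (s : ℕ) (x y : ℝ) (a : ℕ) : ℝ :=
  ∑ j ∈ range (a + 1), (q ^ s * y) ^ j * qP q y (a - j) * qP q x j * qBinom q a j

variable {q : ℝ}

lemma qVandermondeSum_succ (hq : ∀ n, qP q q n ≠ 0) (s : ℕ) (x y : ℝ) (a : ℕ) :
    qVandermondeSum q s x y (a + 1) =
      (1 - y) * qVandermondeSum q s x (q * y) a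
        + q ^ s * y * (1 - x) * qVandermondeSum q s (q * x) y a := by
  -- Pascal's rule splits the sum in two; the first half peels `1 - y` off `(y;q)_{a+1-j}`,
  -- the second peels `1 - x` off `(x;q)_{j+1}`.
  have hfirst : ∑ j ∈ range (a + 1 + 1),
      (q ^ s * (q * y)) ^ j * qP q y (a + 1 - j) * qP q x j * qBinom q a j =
        (1 - y) * qVandermondeSum q s x (q * y) a := by
    rw [sum_range_succ, qBinom_of_lt (Nat.lt_succ_self a), mul_zero, add_zero, qVandermondeSum,
      mul_sum]
    refine sum_congr rfl fun j hj => ?_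
    rw [Nat.sub_add_comm (mem_range_succ_iff.1 hj), qP_succ']
    ring
  have hsecond : ∑ j ∈ range (a + 1),
      (q ^ s * y) ^ (j + 1) * qP q y (a - j) * qP q x (j + 1) * qBinom q a j =
        q ^ s * y * (1 - x) * qVandermondeSum q s (q * x) y a := by
    rw [qVandermondeSum, mul_sum]
    refine sum_congr rfl fun j _ => ?_
    rw [qP_succ']
    ring
  rw [sum_range_succ'] at hfirst
  rw [qVandermondeSum, sum_range_succ', ← hfirst, ← hsecond, add_right_comm,
    ← sum_add_distrib]
  congr 1
  · refine sum_congr rfl fun j _ => ?_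
    rw [qBinom_succ_succ hq, Nat.add_sub_add_right]
    ring
  · rw [qBinom_zero_right hq, qBinom_zero_right hq, pow_zero, pow_zero]

lemma qVandermondeSum_succ_succ (hq : ∀ n, qP q q n ≠ 0) (s : ℕ) (x y : ℝ) (a : ℕ) :
    qVandermondeSum q (s + 1) x y (a + 1) =
      qVandermondeSum q s x (q * y) (a + 1)
        - y * (1 - q ^ (a + 1)) * qVandermondeSum q s x (q * y) a := by
  have hlast : qVandermondeSum q s x (q * y) a = ∑ j ∈ range (a + 1 + 1),
      (q ^ s * (q * y)) ^ j * qP q (q * y) (a - j) * qP q x j * qBinom q a j := by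
    rw [sum_range_succ, qBinom_of_lt (Nat.lt_succ_self a), mul_zero, add_zero, qVandermondeSum]
  rw [hlast, qVandermondeSum, qVandermondeSum, mul_sum, ← sum_sub_distrib]
  refine sum_congr rfl fun j _ => ?_
  rw [qP_eq_qP_mul_sub q y, show a + 1 - j - 1 = a - j by omega]
  linear_combination -(q ^ s * (q * y)) ^ j * qP q (q * y) (a - j) * qP q x j * y
    * qBinom_succ_mul_one_sub_pow hq a j

theorem qVandermondeSum_zero_eq_qP (hq : ∀ n, qP q q n ≠ 0) (x y : ℝ) (a : ℕ) :
    qVandermondeSum q 0 x y a = qP q (x * y) a := by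
  induction a generalizing x y with
  | zero => simp [qVandermondeSum, qP, qBinom]
  | succ a ih =>
    rw [qVandermondeSum_succ hq, ih, ih, qP_succ', show x * (q * y) = q * (x * y) by ring,
      show q * x * y = q * (x * y) by ring]
    ring

theorem qVandermondeSum_eq_zero (hq : ∀ n, qP q q n ≠ 0) {s k a : ℕ} (hsk : s ≤ k)
    (hka : k < a) {x y : ℝ} (hxy : x * y * q ^ k = 1) : qVandermondeSum q s x y a = 0 := by
  induction s generalizing k a y with
  | zero => rw [qVandermondeSum_zero_eq_qP hq]; exact qP_eq_zero_of_mul_pow_eq_one hka hxy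
  | succ s ih =>
    obtain ⟨k, rfl⟩ : ∃ k', k = k' + 1 := ⟨k - 1, by omega⟩
    obtain ⟨a, rfl⟩ : ∃ a', a = a' + 1 := ⟨a - 1, by omega⟩
    have hxqy : x * (q * y) * q ^ k = 1 := by rw [← hxy]; ring
    rw [qVandermondeSum_succ_succ hq, ih (by omega) (by omega) hxqy,
      ih (by omega) (by omega) hxqy]
    ring

end QVandermonde

/-- For `0 ≤ s ≤ k < a`, the sum
`f_{a,k,s}(ν) = ∑_{j=0}^{a} (q^s ν)^j (ν;q)_{a-j} (ν^{-1}q^{-k};q)_j binom_q(a,j)`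
vanishes. -/
theorem f_vanishes (q ν : ℝ) (hq0 : 0 < q) (hq1 : q < 1) (hν : ν ≠ 0)
    (a k s : ℕ) (hsk : s ≤ k) (hka : k < a) :
    ∑ j ∈ Finset.range (a + 1),
      (q ^ s * ν) ^ j * qP q ν (a - j) * qP q (ν⁻¹ * q ^ (-(k : ℤ))) j *
        qBinom q a j = 0 := by
  have hxy : ν⁻¹ * q ^ (-(k : ℤ)) * ν * q ^ k = 1 := by
    rw [zpow_neg, zpow_natCast]
    field_simp
  exact qVandermondeSum_eq_zero (fun n => (qP_self_pos hq0 hq1 n).ne') hsk hka hxy
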